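/- Fix γ > 0, and for 0 < t < 1 define F_w(t) = -γ² log(1 - t²) and F_s(t) = (2γ + 1) log(1 + t) - (1/2) log t. Then at every point t ∈ (0,1) with γ = (1-t)/(2t) one has F_w'(t) = F_s'(t) and F_w''(t) = F_s''(t), while F_w'''(t) - F_s'''(t) = 1 / ( t³ (1 - t²) ). -/

import Mathlib

/-! Both free energies are elementary, so their first three derivatives are explicit rational
functions on `(0, 1)`. On the critical curve `2γ + 1 = 1 / t`; substituting this makes the first
two derivatives coincide, while the third ones differ by `1 / (t³ (1 - t²))`. -/

open Set Real

section

variable {𝕜 F : Type*} [NontriviallyNormedField 𝕜] [NormedAddCommGroup F] [NormedSpace 𝕜 F]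
  {f f₁ f₂ f₃ g g' : 𝕜 → F} {s : Set 𝕜}

lemma Set.EqOn.iteratedDeriv_succ_of_hasDerivAt {n : ℕ} (hs : IsOpen s)
    (hfg : EqOn (iteratedDeriv n f) g s) (hg : ∀ x ∈ s, HasDerivAt g (g' x) x) :
    EqOn (iteratedDeriv (n + 1) f) g' s := by
  intro x hx
  rw [iteratedDeriv_succ, hfg.deriv hs hx]
  exact (hg x hx).deriv

lemma eqOn_iteratedDeriv_three_of_hasDerivAt (hs : IsOpen s)
    (h₁ : ∀ x ∈ s, HasDerivAt f (f₁ x) x) (h₂ : ∀ x ∈ s, HasDerivAt f₁ (f₂ x) x)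
    (h₃ : ∀ x ∈ s, HasDerivAt f₂ (f₃ x) x) :
    EqOn (deriv f) f₁ s ∧ EqOn (iteratedDeriv 2 f) f₂ s ∧ EqOn (iteratedDeriv 3 f) f₃ s := by
  have e₁ : EqOn (iteratedDeriv 1 f) f₁ s :=
    EqOn.iteratedDeriv_succ_of_hasDerivAt (n := 0) hs (fun x _ => by rw [iteratedDeriv_zero]) h₁
  have e₂ := e₁.iteratedDeriv_succ_of_hasDerivAt hs h₂
  refine ⟨iteratedDeriv_one (f := f) ▸ e₁, e₂, e₂.iteratedDeriv_succ_of_hasDerivAt hs h₃⟩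

end

-- `abbrev`, so that `rw` sees through them to the lambdas of the main statement.
noncomputable abbrev freeEnergyWeak (γ s : ℝ) : ℝ := -γ ^ 2 * log (1 - s ^ 2)

noncomputable abbrev freeEnergyStrong (γ s : ℝ) : ℝ := (2 * γ + 1) * log (1 + s) - 1 / 2 * log s

section

variable (γ : ℝ)

theorem eqOn_iteratedDeriv_freeEnergyWeak :
    EqOn (deriv (freeEnergyWeak γ)) (fun s => 2 * γ ^ 2 * s / (1 - s ^ 2)) (Ioo (-1) 1) ∧
    EqOn (iteratedDeriv 2 (freeEnergyWeak γ))
      (fun s => 2 * γ ^ 2 * (1 + s ^ 2) / (1 - s ^ 2) ^ 2) (Ioo (-1) 1) ∧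
    EqOn (iteratedDeriv 3 (freeEnergyWeak γ))
      (fun s => 4 * γ ^ 2 * s * (3 + s ^ 2) / (1 - s ^ 2) ^ 3) (Ioo (-1) 1) := by
  have hne : ∀ s ∈ Ioo (-1 : ℝ) 1, 1 - s ^ 2 ≠ 0 := fun s ⟨h₁, h₂⟩ => by nlinarith
  have hsq (s : ℝ) : HasDerivAt (fun s => 1 - s ^ 2) (-(2 * s)) s := by
    simpa using (hasDerivAt_pow 2 s).const_sub 1
  refine eqOn_iteratedDeriv_three_of_hasDerivAt isOpen_Ioo (fun s hs => ?_) (fun s hs => ?_)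
    (fun s hs => ?_)
  · refine (((hasDerivAt_log (hne s hs)).comp s (hsq s)).const_mul (-γ ^ 2)).congr_deriv ?_
    field_simp
  · refine (((hasDerivAt_id' (x := s)).const_mul (2 * γ ^ 2)).div (hsq s)
      (hne s hs)).congr_deriv ?_
    field_simp; ring
  · refine ((((hasDerivAt_pow 2 s).const_add 1).const_mul (2 * γ ^ 2)).div ((hsq s).fun_pow 2)
      (pow_ne_zero 2 (hne s hs))).congr_deriv ?_
    field_simp [hne s hs]; ring

theorem eqOn_iteratedDeriv_freeEnergyStrong :
    EqOn (deriv (freeEnergyStrong γ)) (fun s => (2 * γ + 1) / (1 + s) - 1 / (2 * s)) (Ioi 0) ∧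
    EqOn (iteratedDeriv 2 (freeEnergyStrong γ))
      (fun s => 1 / (2 * s ^ 2) - (2 * γ + 1) / (1 + s) ^ 2) (Ioi 0) ∧
    EqOn (iteratedDeriv 3 (freeEnergyStrong γ))
      (fun s => 2 * (2 * γ + 1) / (1 + s) ^ 3 - 1 / s ^ 3) (Ioi 0) := by
  have hlin (s : ℝ) : HasDerivAt (fun s => 1 + s) 1 s := by
    simpa using (hasDerivAt_id' (x := s)).const_add 1
  refine eqOn_iteratedDeriv_three_of_hasDerivAt isOpen_Ioi (fun s hs => ?_) (fun s hs => ?_)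
    (fun s hs => ?_) <;> have hs : 0 < s := hs
  · refine ((((hasDerivAt_log (by positivity)).comp s (hlin s)).const_mul (2 * γ + 1)).sub
      ((hasDerivAt_log hs.ne').const_mul (1 / 2))).congr_deriv ?_
    field_simp
  · refine (((hasDerivAt_const s (2 * γ + 1)).div (hlin s) (by positivity)).sub
      ((hasDerivAt_const s 1).div ((hasDerivAt_id' (x := s)).const_mul 2)
        (by positivity))).congr_deriv ?_
    field_simp; ring
  · refine (((hasDerivAt_const s 1).div ((hasDerivAt_pow 2 s).const_mul 2)
      (by positivity : 2 * s ^ 2 ≠ 0)).sub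
      ((hasDerivAt_const s (2 * γ + 1)).div ((hlin s).fun_pow 2) (by positivity))).congr_deriv ?_
    field_simp; ring

end

theorem emodel_third_order_transition_general (γ : ℝ) (t : ℝ)
    (ht : t ∈ Set.Ioo (0 : ℝ) 1) (hc : γ = (1 - t) / (2 * t)) :
    deriv (fun s : ℝ => -γ ^ 2 * Real.log (1 - s ^ 2)) t
        = deriv (fun s : ℝ => (2 * γ + 1) * Real.log (1 + s) - (1 / 2) * Real.log s) t
    ∧ iteratedDeriv 2 (fun s : ℝ => -γ ^ 2 * Real.log (1 - s ^ 2)) t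
        = iteratedDeriv 2
            (fun s : ℝ => (2 * γ + 1) * Real.log (1 + s) - (1 / 2) * Real.log s) t
    ∧ iteratedDeriv 3 (fun s : ℝ => -γ ^ 2 * Real.log (1 - s ^ 2)) t
        - iteratedDeriv 3
            (fun s : ℝ => (2 * γ + 1) * Real.log (1 + s) - (1 / 2) * Real.log s) t
      = 1 / (t ^ 3 * (1 - t ^ 2)) := by
  obtain ⟨ht₀, ht₁⟩ := ht
  obtain ⟨w₁, w₂, w₃⟩ := eqOn_iteratedDeriv_freeEnergyWeak γ
  obtain ⟨s₁, s₂, s₃⟩ := eqOn_iteratedDeriv_freeEnergyStrong γ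
  have hw : t ∈ Ioo (-1 : ℝ) 1 := ⟨by linarith, ht₁⟩
  have hs : t ∈ Ioi (0 : ℝ) := ht₀
  rw [w₁ hw, w₂ hw, w₃ hw, s₁ hs, s₂ hs, s₃ hs]
  have h1t : 1 - t ^ 2 ≠ 0 := by nlinarith
  have h1t' : 1 + t ≠ 0 := by linarith
  subst hc
  refine ⟨?_, ?_, ?_⟩ <;> field_simp <;> ring

/-- Third-order phase transition of the symmetric E-model: across the critical curve
`γ = (1-t)/(2t)` the weak- and strong-coupling free energies agree to second order in `t`,
while the third `t`-derivatives jump by `1/(t³(1-t²))`. -/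
theorem emodel_third_order_transition (γ : ℝ) (hγ : 0 < γ) (t : ℝ)
    (ht : t ∈ Set.Ioo (0 : ℝ) 1) (hc : γ = (1 - t) / (2 * t)) :
    deriv (fun s : ℝ => -γ ^ 2 * Real.log (1 - s ^ 2)) t
        = deriv (fun s : ℝ => (2 * γ + 1) * Real.log (1 + s) - (1 / 2) * Real.log s) t
    ∧ iteratedDeriv 2 (fun s : ℝ => -γ ^ 2 * Real.log (1 - s ^ 2)) t
        = iteratedDeriv 2
            (fun s : ℝ => (2 * γ + 1) * Real.log (1 + s) - (1 / 2) * Real.log s) t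
    ∧ iteratedDeriv 3 (fun s : ℝ => -γ ^ 2 * Real.log (1 - s ^ 2)) t
        - iteratedDeriv 3
            (fun s : ℝ => (2 * γ + 1) * Real.log (1 + s) - (1 / 2) * Real.log s) t
      = 1 / (t ^ 3 * (1 - t ^ 2)) :=
  emodel_third_order_transition_general γ t ht hc
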